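/- arXiv:1705.06148 — 5 statements merged into one kernel-verified Lean document; each statement's English description precedes it below -/
import Mathlib

section
/- Let W be a real n²×n² matrix, c ∈ ℝ^(n²), d ∈ ℝ, and define E(X,a) = xᵀWx + cᵀx + d − a‖X‖_F² + a·n, where x is the column stack of X. Then for all doubly stochastic n×n matrices X and all real a < b, we have E(X,a) ≤ E(X,b), with equality if and only if X is a permutation matrix. -/
open Matrix

def IsPermMatrix {n : ℕ} (X : Matrix (Fin n) (Fin n) ℝ) : Prop :=
  ∃ σ : Equiv.Perm (Fin n), ∀ i j, X i j = if σ i = j then 1 else 0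

def IsDoublyStochastic {n : ℕ} (X : Matrix (Fin n) (Fin n) ℝ) : Prop :=
  (∀ i j, 0 ≤ X i j) ∧ (∀ i, ∑ j, X i j = 1) ∧ (∀ j, ∑ i, X i j = 1)

/-- Column stack of a matrix, as a vector indexed by `Fin n × Fin n`. -/
def colStack {n : ℕ} (X : Matrix (Fin n) (Fin n) ℝ) : Fin n × Fin n → ℝ :=
  fun p => X p.1 p.2

/-- The one-parameter family of energies
`E(X,a) = xᵀWx + cᵀx + d − a‖X‖_F² + a·n`, `x` the column stack of `X`. -/
def energy {n : ℕ} (W : Matrix (Fin n × Fin n) (Fin n × Fin n) ℝ)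
    (c : Fin n × Fin n → ℝ) (d : ℝ) (X : Matrix (Fin n) (Fin n) ℝ) (a : ℝ) : ℝ :=
  colStack X ⬝ᵥ (W *ᵥ colStack X) + c ⬝ᵥ colStack X + d
    - a * (∑ i, ∑ j, (X i j) ^ 2) + a * n

/-!
The energy is affine in `a`: `E(X,b) - E(X,a) = (b - a) (n - ‖X‖_F²)`. The entries of a doubly
stochastic matrix lie in `[0,1]`, so `X i j ^ 2 ≤ X i j`, and summing gives
`‖X‖_F² ≤ ∑ X i j = n`, with equality exactly when every entry is `0` or `1`. A doubly
stochastic `0`/`1` matrix has a single `1` in each row and each column, i.e. it is a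
permutation matrix.
-/

open Finset

lemma Equiv.Perm.permMatrix_apply {ι R : Type*} [DecidableEq ι] [Zero R] [One R]
    (σ : Equiv.Perm ι) (i j : ι) : σ.permMatrix R i j = if σ i = j then 1 else 0 := by
  simp [PEquiv.toMatrix_apply, Equiv.toPEquiv_apply]

lemma Fintype.existsUnique_eq_one_of_sum_eq_one {ι S : Type*} [Fintype ι]
    [AddCommMonoidWithOne S] [CharZero S] {v : ι → S} (h01 : ∀ j, v j = 0 ∨ v j = 1)
    (hsum : ∑ j, v j = 1) : ∃! j, v j = 1 := by
  classical
  have hcard : #{j | v j = 1} = 1 := by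
    have hboole : ∑ j, v j = ∑ j, if v j = 1 then (1 : S) else 0 :=
      Finset.sum_congr rfl fun j _ => by rcases h01 j with h | h <;> simp [h]
    exact_mod_cast (Finset.sum_boole (fun j => v j = 1) univ).symm.trans (hboole ▸ hsum)
  obtain ⟨a, ha⟩ := Finset.card_eq_one.1 hcard
  obtain ⟨ha_mem, ha_unique⟩ := Finset.eq_singleton_iff_unique_mem.1 ha
  exact ⟨a, (Finset.mem_filter_univ a).1 ha_mem,
    fun j hj => ha_unique j ((Finset.mem_filter_univ j).2 hj)⟩

section DoublyStochastic

variable {R ι : Type*} [Fintype ι] [DecidableEq ι] {M : Matrix ι ι R}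

lemma exists_permMatrix_eq_of_mem_doublyStochastic [Semiring R] [PartialOrder R]
    [IsOrderedRing R] [CharZero R] (hM : M ∈ doublyStochastic R ι)
    (h01 : ∀ i j, M i j = 0 ∨ M i j = 1) : ∃ σ : Equiv.Perm ι, σ.permMatrix R = M := by
  have hrow i := Fintype.existsUnique_eq_one_of_sum_eq_one (h01 i)
    (sum_row_of_mem_doublyStochastic hM i)
  have hcol j := Fintype.existsUnique_eq_one_of_sum_eq_one (h01 · j)
    (sum_col_of_mem_doublyStochastic hM j)
  choose f hf hf_unique using hrow
  have hinj : Function.Injective f := fun i i' h =>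
    (hcol (f i)).unique (hf i) (h ▸ hf i')
  refine ⟨Equiv.ofBijective f (Finite.injective_iff_bijective.1 hinj), ?_⟩
  ext i j
  rw [Equiv.Perm.permMatrix_apply, Equiv.ofBijective_apply]
  split_ifs with h
  · exact (h ▸ hf i).symm
  · exact ((h01 i j).resolve_right fun h1 => h (hf_unique i j h1).symm).symm

variable [CommRing R] [LinearOrder R] [IsStrictOrderedRing R]

lemma card_sub_sum_sq_of_mem_doublyStochastic (hM : M ∈ doublyStochastic R ι) :
    (Fintype.card ι : R) - ∑ i, ∑ j, M i j ^ 2 = ∑ i, ∑ j, (M i j - M i j ^ 2) := by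
  simp only [Finset.sum_sub_distrib, sum_row_of_mem_doublyStochastic hM, Finset.sum_const,
    Finset.card_univ, nsmul_one]

lemma sq_le_self_of_mem_doublyStochastic (hM : M ∈ doublyStochastic R ι) (i j : ι) :
    M i j ^ 2 ≤ M i j :=
  pow_le_of_le_one (nonneg_of_mem_doublyStochastic hM) (le_one_of_mem_doublyStochastic hM)
    two_ne_zero

lemma sum_sq_le_card_of_mem_doublyStochastic (hM : M ∈ doublyStochastic R ι) :
    ∑ i, ∑ j, M i j ^ 2 ≤ Fintype.card ι := by
  rw [← sub_nonneg, card_sub_sum_sq_of_mem_doublyStochastic hM]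
  exact Finset.sum_nonneg fun i _ => Finset.sum_nonneg fun j _ =>
    sub_nonneg.2 (sq_le_self_of_mem_doublyStochastic hM i j)

lemma sum_sq_eq_card_iff_of_mem_doublyStochastic (hM : M ∈ doublyStochastic R ι) :
    ∑ i, ∑ j, M i j ^ 2 = Fintype.card ι ↔ ∀ i j, M i j = 0 ∨ M i j = 1 := by
  have hgap i j : 0 ≤ M i j - M i j ^ 2 :=
    sub_nonneg.2 (sq_le_self_of_mem_doublyStochastic hM i j)
  rw [eq_comm, ← sub_eq_zero, card_sub_sum_sq_of_mem_doublyStochastic hM,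
    Fintype.sum_eq_zero_iff_of_nonneg fun i => Finset.sum_nonneg fun j _ => hgap i j]
  simp only [funext_iff, Pi.zero_apply, Fintype.sum_eq_zero_iff_of_nonneg (hgap _)]
  refine forall₂_congr fun i j => ?_
  rw [show M i j - M i j ^ 2 = M i j * (1 - M i j) by ring, mul_eq_zero, sub_eq_zero,
    eq_comm (a := (1 : R))]

theorem sum_sq_eq_card_iff_exists_permMatrix (hM : M ∈ doublyStochastic R ι) :
    ∑ i, ∑ j, M i j ^ 2 = Fintype.card ι ↔ ∃ σ : Equiv.Perm ι, σ.permMatrix R = M := by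
  rw [sum_sq_eq_card_iff_of_mem_doublyStochastic hM]
  refine ⟨exists_permMatrix_eq_of_mem_doublyStochastic hM, ?_⟩
  rintro ⟨σ, rfl⟩ i j
  rw [Equiv.Perm.permMatrix_apply]
  split_ifs <;> simp

end DoublyStochastic

lemma isPermMatrix_iff {n : ℕ} {X : Matrix (Fin n) (Fin n) ℝ} :
    IsPermMatrix X ↔ ∃ σ : Equiv.Perm (Fin n), σ.permMatrix ℝ = X := by
  simp only [IsPermMatrix, ← Matrix.ext_iff, Equiv.Perm.permMatrix_apply, eq_comm]

lemma energy_sub_energy {n : ℕ} (W : Matrix (Fin n × Fin n) (Fin n × Fin n) ℝ)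
    (c : Fin n × Fin n → ℝ) (d : ℝ) (X : Matrix (Fin n) (Fin n) ℝ) (a b : ℝ) :
    energy W c d X b - energy W c d X a = (b - a) * (n - ∑ i, ∑ j, X i j ^ 2) := by
  unfold energy
  ring

theorem stmt_2 {n : ℕ} (W : Matrix (Fin n × Fin n) (Fin n × Fin n) ℝ)
    (c : Fin n × Fin n → ℝ) (d : ℝ) (X : Matrix (Fin n) (Fin n) ℝ)
    (hX : IsDoublyStochastic X) (a b : ℝ) (hab : a < b) :
    energy W c d X a ≤ energy W c d X b ∧
      (energy W c d X a = energy W c d X b ↔ IsPermMatrix X) := by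
  have hM : X ∈ doublyStochastic ℝ (Fin n) := mem_doublyStochastic_iff_sum.2 hX
  have hle := sum_sq_le_card_of_mem_doublyStochastic hM
  have hgap := energy_sub_energy W c d X a b
  rw [Fintype.card_fin] at hle
  refine ⟨sub_nonneg.1 (hgap ▸ mul_nonneg (sub_nonneg.2 hab.le) (sub_nonneg.2 hle)), ?_⟩
  calc energy W c d X a = energy W c d X b
      ↔ (b - a) * (n - ∑ i, ∑ j, X i j ^ 2) = 0 := by rw [← hgap, sub_eq_zero, eq_comm]
    _ ↔ ∑ i, ∑ j, X i j ^ 2 = Fintype.card (Fin n) := by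
      rw [mul_eq_zero, or_iff_right (sub_ne_zero.2 hab.ne'), sub_eq_zero, eq_comm,
        Fintype.card_fin]
    _ ↔ IsPermMatrix X := by rw [sum_sq_eq_card_iff_exists_permMatrix hM, isPermMatrix_iff]
end

section
/- Let X be a doubly stochastic matrix minimizing E(·,a) over doubly stochastic matrices for some a > λ̄_max. Then X is a permutation matrix. -/
open Matrix

/-!
A quadratic function is strictly concave on a convex set as soon as its quadratic form is negative
definite on the differences of points of the set. The differences of doubly stochastic matrices
have zero row and column sums, so they are the vectors `F z`, and for `z ≠ 0`
`(F z)ᵀ (W - a I) (F z) = zᵀ (Fᵀ W F) z - a ‖z‖² ≤ (λ̄_max - a) ‖z‖² < 0`.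
Hence `E(·, a)` is strictly concave on the Birkhoff polytope, so its minimisers are extreme points,
i.e. permutation matrices.
-/

open MatrixOrder

theorem Matrix.IsHermitian.dotProduct_mulVec_le {k : Type*} [Fintype k] [DecidableEq k]
    {M : Matrix k k ℝ} (hM : M.IsHermitian) {lam : ℝ}
    (hlam : ∀ μ, Module.End.HasEigenvalue (toLin' M) μ → μ ≤ lam) (z : k → ℝ) :
    z ⬝ᵥ (M *ᵥ z) ≤ lam * (z ⬝ᵥ z) := by
  have hle : M ≤ algebraMap ℝ _ lam := by
    rw [le_algebraMap_iff_spectrum_le hM.isSelfAdjoint]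
    intro μ hμ
    apply hlam
    rwa [Module.End.hasEigenvalue_iff_mem_spectrum, spectrum_toLin']
  simpa [sub_mulVec, Algebra.algebraMap_eq_smul_one, smul_mulVec, dotProduct_smul] using
    (le_iff.1 hle).dotProduct_mulVec_nonneg z

theorem StrictConcaveOn.comp_linearMap_of_injective {𝕜 E F β : Type*} [Field 𝕜] [LinearOrder 𝕜]
    [AddCommGroup E] [AddCommGroup F] [AddCommMonoid β] [PartialOrder β] [Module 𝕜 E]
    [Module 𝕜 F] [SMul 𝕜 β] {f : F → β} {s : Set E} (g : E →ₗ[𝕜] F) (hg : Function.Injective g)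
    (hf : StrictConcaveOn 𝕜 (g '' s) f) : StrictConcaveOn 𝕜 s (f ∘ g) := by
  refine ⟨by simpa [Set.preimage_image_eq s hg] using hf.1.linear_preimage g, ?_⟩
  intro x hx y hy hxy a b ha hb hab
  simpa using hf.2 (Set.mem_image_of_mem g hx) (Set.mem_image_of_mem g hy) (hg.ne hxy) ha hb hab

theorem StrictConcaveOn.mem_extremePoints_of_isMinOn {𝕜 E β : Type*} [Field 𝕜] [LinearOrder 𝕜]
    [IsStrictOrderedRing 𝕜] [AddCommGroup E] [Module 𝕜 E] [AddCommMonoid β] [LinearOrder β]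
    [IsOrderedAddMonoid β] [Module 𝕜 β] [PosSMulMono 𝕜 β] {f : E → β} {s : Set E} {x : E}
    (hf : StrictConcaveOn 𝕜 s f) (hx : x ∈ s) (hmin : IsMinOn f s x) :
    x ∈ s.extremePoints 𝕜 := by
  refine ⟨hx, fun x₁ hx₁ x₂ hx₂ hseg => ?_⟩
  by_cases h₁₂ : x₁ = x₂
  · subst h₁₂
    rw [openSegment_same] at hseg
    exact hseg.symm
  obtain ⟨a, b, ha, hb, hab, rfl⟩ := hseg
  refine absurd (hf.2 hx₁ hx₂ h₁₂ ha hb hab) (not_lt.2 ?_)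
  calc f (a • x₁ + b • x₂) = a • f (a • x₁ + b • x₂) + b • f (a • x₁ + b • x₂) := by
        rw [← add_smul, hab, one_smul]
    _ ≤ a • f x₁ + b • f x₂ := by
        gcongr
        exacts [hmin hx₁, hmin hx₂]

section QuadraticFunction

variable {m : Type*} [Fintype m] {A : Matrix m m ℝ}

theorem Matrix.IsSymm.dotProduct_mulVec_comm (hA : A.IsSymm) (x y : m → ℝ) :
    x ⬝ᵥ (A *ᵥ y) = y ⬝ᵥ (A *ᵥ x) := by
  rw [dotProduct_mulVec, ← mulVec_transpose, hA.eq, dotProduct_comm]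

theorem Matrix.IsSymm.dotProduct_mulVec_convexCombination (hA : A.IsSymm) (x y : m → ℝ)
    {t s : ℝ} (hts : t + s = 1) :
    (t • x + s • y) ⬝ᵥ (A *ᵥ (t • x + s • y)) = t * (x ⬝ᵥ (A *ᵥ x)) + s * (y ⬝ᵥ (A *ᵥ y))
      - t * s * ((x - y) ⬝ᵥ (A *ᵥ (x - y))) := by
  obtain rfl : s = 1 - t := by linarith
  simp only [mulVec_add, mulVec_sub, mulVec_smul, dotProduct_add, dotProduct_sub, add_dotProduct,
    sub_dotProduct, dotProduct_smul, smul_dotProduct, smul_eq_mul, hA.dotProduct_mulVec_comm y x]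
  ring

theorem strictConcaveOn_quadratic (hA : A.IsSymm) {s : Set (m → ℝ)} (hs : Convex ℝ s)
    (hneg : ∀ x ∈ s, ∀ y ∈ s, x ≠ y → (x - y) ⬝ᵥ (A *ᵥ (x - y)) < 0) (c : m → ℝ) (d : ℝ) :
    StrictConcaveOn ℝ s fun x => x ⬝ᵥ (A *ᵥ x) + c ⬝ᵥ x + d := by
  refine ⟨hs, fun x hx y hy hxy a b ha hb hab => ?_⟩
  have hq := hneg x hx y hy hxy
  have hc : c ⬝ᵥ (a • x + b • y) = a * (c ⬝ᵥ x) + b * (c ⬝ᵥ y) := by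
    simp only [dotProduct_add, dotProduct_smul, smul_eq_mul]
  simp only [smul_eq_mul, hA.dotProduct_mulVec_convexCombination x y hab, hc]
  obtain rfl : b = 1 - a := by linarith
  nlinarith [mul_pos ha hb]

end QuadraticFunction

theorem dotProduct_mulVec_sub_smul_one_neg {m k : Type*} [Fintype m] [Fintype k] [DecidableEq m]
    [DecidableEq k] {W : Matrix m m ℝ} (hW : W.IsSymm) {F : Matrix m k ℝ} (hF : Fᵀ * F = 1)
    {lam a : ℝ} (hlam : ∀ μ, Module.End.HasEigenvalue (toLin' (Fᵀ * W * F)) μ → μ ≤ lam)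
    (ha : lam < a) {z : k → ℝ} (hz : z ≠ 0) :
    (F *ᵥ z) ⬝ᵥ ((W - a • 1) *ᵥ (F *ᵥ z)) < 0 := by
  have hFWF : (Fᵀ * W * F).IsHermitian := by
    simpa [conjTranspose_eq_transpose_of_trivial] using
      isHermitian_conjTranspose_mul_mul F (isHermitian_iff_isSymm.2 hW)
  have hpull : ∀ N : Matrix m m ℝ, (F *ᵥ z) ⬝ᵥ (N *ᵥ (F *ᵥ z)) = z ⬝ᵥ ((Fᵀ * N * F) *ᵥ z) := by
    intro N
    rw [dotProduct_comm, dotProduct_mulVec, ← mulVec_transpose, dotProduct_comm, mulVec_mulVec,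
      mulVec_mulVec, Matrix.mul_assoc, ← Matrix.mul_assoc]
  have hzz : 0 < z ⬝ᵥ z := dotProduct_self_star_pos_iff.2 hz
  have hsup := hFWF.dotProduct_mulVec_le hlam z
  rw [hpull, Matrix.mul_sub, Matrix.sub_mul, Matrix.mul_smul, Matrix.smul_mul, Matrix.mul_one, hF,
    sub_mulVec, dotProduct_sub, smul_mulVec, one_mulVec, dotProduct_smul, smul_eq_mul]
  nlinarith

theorem isDoublyStochastic_iff_mem_doublyStochastic {n : ℕ} {X : Matrix (Fin n) (Fin n) ℝ} :
    IsDoublyStochastic X ↔ X ∈ doublyStochastic ℝ (Fin n) :=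
  mem_doublyStochastic_iff_sum.symm

theorem isPermMatrix_permMatrix {n : ℕ} (σ : Equiv.Perm (Fin n)) : IsPermMatrix (σ.permMatrix ℝ) :=
  ⟨σ, fun i j => by simp [Equiv.Perm.permMatrix, PEquiv.toMatrix_apply]⟩

theorem energy_eq_quadratic {n : ℕ} (W : Matrix (Fin n × Fin n) (Fin n × Fin n) ℝ)
    (c : Fin n × Fin n → ℝ) (d : ℝ) (X : Matrix (Fin n) (Fin n) ℝ) (a : ℝ) :
    energy W c d X a =
      colStack X ⬝ᵥ ((W - a • 1) *ᵥ colStack X) + c ⬝ᵥ colStack X + (d + a * n) := by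
  have hfrob : ∑ i, ∑ j, X i j ^ 2 = colStack X ⬝ᵥ colStack X := by
    simp only [dotProduct, Fintype.sum_prod_type, colStack, sq]
  rw [energy, hfrob, sub_mulVec, smul_mulVec, one_mulVec, dotProduct_sub, dotProduct_smul,
    smul_eq_mul]
  ring

theorem sum_colStack_sub_eq_zero {n : ℕ} {X Y : Matrix (Fin n) (Fin n) ℝ}
    (hX : X ∈ doublyStochastic ℝ (Fin n)) (hY : Y ∈ doublyStochastic ℝ (Fin n)) :
    (∀ i, ∑ j, (colStack X - colStack Y) (i, j) = 0) ∧
      ∀ j, ∑ i, (colStack X - colStack Y) (i, j) = 0 := by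
  rw [mem_doublyStochastic_iff_sum] at hX hY
  refine ⟨fun i => ?_, fun j => ?_⟩ <;>
    simp only [Pi.sub_apply, colStack, Finset.sum_sub_distrib, hX.2.1, hY.2.1, hX.2.2, hY.2.2,
      sub_self]

theorem strictConcaveOn_energy {n k : ℕ} {W : Matrix (Fin n × Fin n) (Fin n × Fin n) ℝ}
    (hW : W.IsSymm) (c : Fin n × Fin n → ℝ) (d : ℝ) {F : Matrix (Fin n × Fin n) (Fin k) ℝ}
    (hF : Fᵀ * F = 1)
    (hker : ∀ y : Fin n × Fin n → ℝ, ((∀ i, ∑ j, y (i, j) = 0) ∧ (∀ j, ∑ i, y (i, j) = 0)) →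
      ∃ z, F *ᵥ z = y)
    {lam a : ℝ} (hlam : ∀ μ, Module.End.HasEigenvalue (toLin' (Fᵀ * W * F)) μ → μ ≤ lam)
    (ha : lam < a) :
    StrictConcaveOn ℝ (doublyStochastic ℝ (Fin n)) (energy W c d · a) := by
  let L : Matrix (Fin n) (Fin n) ℝ →ₗ[ℝ] Fin n × Fin n → ℝ :=
    (LinearEquiv.curry ℝ ℝ (Fin n) (Fin n)).symm.toLinearMap
  have hL : ⇑L = colStack := rfl
  have hneg : ∀ x ∈ L '' doublyStochastic ℝ (Fin n), ∀ y ∈ L '' doublyStochastic ℝ (Fin n),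
      x ≠ y → (x - y) ⬝ᵥ ((W - a • 1) *ᵥ (x - y)) < 0 := by
    rintro _ ⟨X, hX, rfl⟩ _ ⟨Y, hY, rfl⟩ hXY
    obtain ⟨z, hz⟩ := hker _ (hL ▸ sum_colStack_sub_eq_zero hX hY)
    have hz0 : z ≠ 0 := by
      rintro rfl
      exact hXY (sub_eq_zero.1 (by rw [← hz, mulVec_zero]))
    rw [← hz]
    exact dotProduct_mulVec_sub_smul_one_neg hW hF hlam ha hz0
  have hquad := strictConcaveOn_quadratic (hW.sub (isSymm_one.smul a))
    (convex_doublyStochastic.linear_image L) hneg c (d + a * n)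
  have henergy : (energy W c d · a) =
      (fun x => x ⬝ᵥ ((W - a • 1) *ᵥ x) + c ⬝ᵥ x + (d + a * n)) ∘ L :=
    funext fun X => energy_eq_quadratic W c d X a
  rw [henergy]
  exact hquad.comp_linearMap_of_injective L (LinearEquiv.injective _)

theorem stmt_10 {n k : ℕ} (W : Matrix (Fin n × Fin n) (Fin n × Fin n) ℝ) (hW : W.IsSymm)
    (c : Fin n × Fin n → ℝ) (d : ℝ)
    (F : Matrix (Fin n × Fin n) (Fin k) ℝ) (hF : Fᵀ * F = 1)
    (hker : ∀ y : Fin n × Fin n → ℝ, (∃ z, F *ᵥ z = y) ↔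
      ((∀ i, ∑ j, y (i, j) = 0) ∧ (∀ j, ∑ i, y (i, j) = 0)))
    (lamMax : ℝ)
    (hmax : IsGreatest {μ | Module.End.HasEigenvalue (Matrix.toLin' (Fᵀ * W * F)) μ} lamMax)
    (a : ℝ) (ha : lamMax < a)
    (X : Matrix (Fin n) (Fin n) ℝ) (hX : IsDoublyStochastic X)
    (hXmin : ∀ Y, IsDoublyStochastic Y → energy W c d X a ≤ energy W c d Y a) :
    IsPermMatrix X := by
  have hconc := strictConcaveOn_energy hW c d hF (fun y => (hker y).2)
    (fun μ hμ => hmax.2 hμ) ha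
  have hext : X ∈ (doublyStochastic ℝ (Fin n) : Set _).extremePoints ℝ :=
    hconc.mem_extremePoints_of_isMinOn (isDoublyStochastic_iff_mem_doublyStochastic.1 hX)
      fun Y hY => hXmin Y (isDoublyStochastic_iff_mem_doublyStochastic.2 hY)
  rw [extremePoints_doublyStochastic] at hext
  obtain ⟨σ, rfl⟩ := hext
  exact isPermMatrix_permMatrix σ
end

section
/- For a > λ̄_max, the minimum of E(·,a) over the doubly stochastic matrices equals the minimum of the original energy E(X) = xᵀWx + cᵀx + d over the permutation matrices. -/
open Matrix

/-!
Differences of doubly stochastic matrices have zero row and column sums, so their column stacks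
lie in the range of the isometry `F`, where the quadratic form of `W` is bounded by
`λ̄_max ‖·‖² ≤ a ‖·‖²`. Hence the quadratic part `W - a I` of `E(·,a)` is negative semidefinite
along the Birkhoff polytope and `E(·,a)` is concave on it. The polytope is the convex hull of the
finitely many permutation matrices, so the infimum is attained at one of them, where
`‖X‖_F² = n` and `E(X,a) = E(X)`.
-/

open scoped Pointwise

theorem Matrix.IsHermitian.dotProduct_mulVec_le_mul_dotProduct {ι : Type*} [Fintype ι]
    [DecidableEq ι] {M : Matrix ι ι ℝ} (hM : M.IsHermitian) {a : ℝ}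
    (h : ∀ μ, Module.End.HasEigenvalue (toLin' M) μ → μ ≤ a) (z : ι → ℝ) :
    z ⬝ᵥ (M *ᵥ z) ≤ a * (z ⬝ᵥ z) := by
  have hN : (algebraMap ℝ _ a - M).IsHermitian := by
    rw [Algebra.algebraMap_eq_smul_one]
    exact (isHermitian_one.smul (IsSelfAdjoint.all a)).sub hM
  have hpsd : (algebraMap ℝ (Matrix ι ι ℝ) a - M).PosSemidef := by
    refine hN.posSemidef_iff_eigenvalues_nonneg.2 fun i => ?_
    obtain ⟨_, rfl, μ, hμ, he⟩ : hN.eigenvalues i ∈ {a} - spectrum ℝ M := by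
      rw [spectrum.singleton_sub_eq]; exact hN.eigenvalues_mem_spectrum_real i
    have := h μ (Module.End.hasEigenvalue_iff_mem_spectrum.2 (by rwa [spectrum_toLin']))
    simp only [Pi.zero_apply, ← he]
    linarith
  have := hpsd.dotProduct_mulVec_nonneg z
  rw [star_trivial, sub_mulVec, dotProduct_sub, Algebra.algebraMap_eq_smul_one, smul_mulVec,
    one_mulVec, dotProduct_smul, smul_eq_mul] at this
  linarith

theorem Matrix.dotProduct_mulVec_transpose_mul_mul {m k R : Type*} [Fintype m] [Fintype k]
    [CommSemiring R] (F : Matrix m k R) (W : Matrix m m R) (z : k → R) :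
    z ⬝ᵥ ((Fᵀ * W * F) *ᵥ z) = (F *ᵥ z) ⬝ᵥ (W *ᵥ (F *ᵥ z)) := by
  rw [← mulVec_mulVec, ← mulVec_mulVec, dotProduct_mulVec, vecMul_transpose]

theorem Matrix.IsSymm.dotProduct_mulVec_le_of_transpose_mul_self {m k : Type*} [Fintype m]
    [Fintype k] [DecidableEq k] {W : Matrix m m ℝ} (hW : W.IsSymm) {F : Matrix m k ℝ}
    (hF : Fᵀ * F = 1) {a : ℝ}
    (h : ∀ μ, Module.End.HasEigenvalue (toLin' (Fᵀ * W * F)) μ → μ ≤ a) (z : k → ℝ) :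
    (F *ᵥ z) ⬝ᵥ (W *ᵥ (F *ᵥ z)) ≤ a * ((F *ᵥ z) ⬝ᵥ (F *ᵥ z)) := by
  have hM : (Fᵀ * W * F).IsHermitian := by
    simpa using isHermitian_conjTranspose_mul_mul F (isHermitian_iff_isSymm.2 hW)
  have hnorm : (F *ᵥ z) ⬝ᵥ (F *ᵥ z) = z ⬝ᵥ z := by
    rw [dotProduct_mulVec, ← mulVec_transpose, mulVec_mulVec, hF, one_mulVec]
  rw [hnorm, ← dotProduct_mulVec_transpose_mul_mul]
  exact hM.dotProduct_mulVec_le_mul_dotProduct h z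

theorem Matrix.IsSymm.dotProduct_mulVec_add_smul {ι : Type*} [Fintype ι] {A : Matrix ι ι ℝ}
    (hA : A.IsSymm) (x y : ι → ℝ) {t s : ℝ} (hts : t + s = 1) :
    (t • x + s • y) ⬝ᵥ (A *ᵥ (t • x + s • y)) = t * (x ⬝ᵥ (A *ᵥ x)) + s * (y ⬝ᵥ (A *ᵥ y))
      - t * s * ((x - y) ⬝ᵥ (A *ᵥ (x - y))) := by
  have hsymm : y ⬝ᵥ (A *ᵥ x) = x ⬝ᵥ (A *ᵥ y) := by
    rw [dotProduct_mulVec, ← mulVec_transpose, hA.eq, dotProduct_comm]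
  obtain rfl : s = 1 - t := by linarith
  simp only [mulVec_add, mulVec_sub, mulVec_smul, dotProduct_add, dotProduct_sub, add_dotProduct,
    sub_dotProduct, dotProduct_smul, smul_dotProduct, smul_eq_mul, hsymm]
  ring

theorem Matrix.IsSymm.concaveOn_dotProduct_mulVec_comp {ι E : Type*} [Fintype ι]
    [AddCommGroup E] [Module ℝ E] {A : Matrix ι ι ℝ} (hA : A.IsSymm) (L : E →ₗ[ℝ] ι → ℝ)
    {S : Set E} (hS : Convex ℝ S) (h : ∀ x ∈ S, ∀ y ∈ S, L (x - y) ⬝ᵥ (A *ᵥ L (x - y)) ≤ 0) :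
    ConcaveOn ℝ S fun x => L x ⬝ᵥ (A *ᵥ L x) := by
  refine ⟨hS, fun x hx y hy t s ht hs hts => ?_⟩
  have := mul_nonneg (mul_nonneg ht hs) (neg_nonneg.2 (h x hx y hy))
  simp only [map_add, map_smul, map_sub, smul_eq_mul,
    hA.dotProduct_mulVec_add_smul _ _ hts] at this ⊢
  linarith

theorem ConcaveOn.sInf_image_convexHull {E : Type*} [AddCommGroup E] [Module ℝ E] {P : Set E}
    {f : E → ℝ} (hf : ConcaveOn ℝ (convexHull ℝ P) f) (hP : P.Finite) :
    sInf (f '' convexHull ℝ P) = sInf (f '' P) := by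
  rcases P.eq_empty_or_nonempty with rfl | hne
  · simp
  have hlb : ∀ v ∈ f '' convexHull ℝ P, sInf (f '' P) ≤ v := by
    rintro _ ⟨x, hx, rfl⟩
    obtain ⟨y, hy, hyx⟩ := hf.exists_le_of_mem_convexHull (subset_convexHull ℝ P) hx
    exact (csInf_le (hP.image f).bddBelow (Set.mem_image_of_mem f hy)).trans hyx
  exact le_antisymm
    (csInf_le_csInf ⟨_, hlb⟩ (hne.image f) (Set.image_mono (subset_convexHull ℝ P)))
    (le_csInf ((hne.mono (subset_convexHull ℝ P)).image f) hlb)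

section Energy

variable {n : ℕ}

theorem setOf_isPermMatrix_eq_range :
    {X : Matrix (Fin n) (Fin n) ℝ | IsPermMatrix X} =
      Set.range fun σ : Equiv.Perm (Fin n) => σ.permMatrix ℝ := by
  ext X
  refine exists_congr fun σ => ?_
  rw [eq_comm, ← Matrix.ext_iff]
  simp [Equiv.Perm.permMatrix, PEquiv.toMatrix_apply, eq_comm]

theorem setOf_isDoublyStochastic_eq_convexHull :
    {X : Matrix (Fin n) (Fin n) ℝ | IsDoublyStochastic X} =
      convexHull ℝ {X | IsPermMatrix X} := by
  ext X
  rw [setOf_isPermMatrix_eq_range, Set.mem_ofPred_eq, IsDoublyStochastic,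
    ← mem_doublyStochastic_iff_sum, ← SetLike.mem_coe, doublyStochastic_eq_convexHull_permMatrix]
  rfl

theorem lineSums_colStack_sub_eq_zero {X Y : Matrix (Fin n) (Fin n) ℝ}
    (hX : IsDoublyStochastic X) (hY : IsDoublyStochastic Y) :
    (∀ i, ∑ j, (colStack X - colStack Y) (i, j) = 0) ∧
      ∀ j, ∑ i, (colStack X - colStack Y) (i, j) = 0 := by
  simp only [Pi.sub_apply, colStack, Finset.sum_sub_distrib]
  exact ⟨fun i => by rw [hX.2.1, hY.2.1, sub_self], fun j => by rw [hX.2.2, hY.2.2, sub_self]⟩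

def colStackₗ : Matrix (Fin n) (Fin n) ℝ →ₗ[ℝ] Fin n × Fin n → ℝ where
  toFun := colStack
  map_add' _ _ := rfl
  map_smul' _ _ := rfl

theorem energy_eq_dotProduct_mulVec (W : Matrix (Fin n × Fin n) (Fin n × Fin n) ℝ)
    (c : Fin n × Fin n → ℝ) (d : ℝ) (X : Matrix (Fin n) (Fin n) ℝ) (a : ℝ) :
    energy W c d X a =
      colStack X ⬝ᵥ ((W - a • 1) *ᵥ colStack X) + c ⬝ᵥ colStack X + (d + a * n) := by
  have hsq : ∑ i, ∑ j, X i j ^ 2 = colStack X ⬝ᵥ colStack X := by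
    simp [dotProduct, Fintype.sum_prod_type, colStack, sq]
  rw [energy, hsq, sub_mulVec, smul_mulVec, one_mulVec, dotProduct_sub, dotProduct_smul,
    smul_eq_mul]
  ring

theorem energy_eq_of_isPermMatrix (W : Matrix (Fin n × Fin n) (Fin n × Fin n) ℝ)
    (c : Fin n × Fin n → ℝ) (d : ℝ) {X : Matrix (Fin n) (Fin n) ℝ} (hX : IsPermMatrix X)
    (a : ℝ) : energy W c d X a = energy W c d X 0 := by
  obtain ⟨σ, hσ⟩ := hX
  have hsq : ∑ i, ∑ j, X i j ^ 2 = n := by simp [hσ]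
  simp [energy, hsq]

theorem concaveOn_energy {W : Matrix (Fin n × Fin n) (Fin n × Fin n) ℝ} (hW : W.IsSymm)
    (c : Fin n × Fin n → ℝ) (d : ℝ) {a : ℝ} {S : Set (Matrix (Fin n) (Fin n) ℝ)}
    (hS : Convex ℝ S)
    (h : ∀ X ∈ S, ∀ Y ∈ S, (colStack X - colStack Y) ⬝ᵥ (W *ᵥ (colStack X - colStack Y))
      ≤ a * ((colStack X - colStack Y) ⬝ᵥ (colStack X - colStack Y))) :
    ConcaveOn ℝ S fun X => energy W c d X a := by
  have hquad := (hW.sub (isSymm_one.smul a)).concaveOn_dotProduct_mulVec_comp colStackₗ hS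
    fun X hX Y hY => by
      have := h X hX Y hY
      rw [map_sub, sub_mulVec, smul_mulVec, one_mulVec, dotProduct_sub, dotProduct_smul,
        smul_eq_mul]
      exact sub_nonpos.2 this
  have hlin := (dotProductBilin ℝ ℝ c ∘ₗ colStackₗ).concaveOn hS
  exact ((hquad.add hlin).add_const (d + a * n)).congr fun X _ =>
    (energy_eq_dotProduct_mulVec W c d X a).symm

end Energy

theorem stmt_11 {n k : ℕ} (W : Matrix (Fin n × Fin n) (Fin n × Fin n) ℝ) (hW : W.IsSymm)
    (c : Fin n × Fin n → ℝ) (d : ℝ)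
    (F : Matrix (Fin n × Fin n) (Fin k) ℝ) (hF : Fᵀ * F = 1)
    (hker : ∀ y : Fin n × Fin n → ℝ, (∃ z, F *ᵥ z = y) ↔
      ((∀ i, ∑ j, y (i, j) = 0) ∧ (∀ j, ∑ i, y (i, j) = 0)))
    (lamMax : ℝ)
    (hmax : IsGreatest {μ | Module.End.HasEigenvalue (Matrix.toLin' (Fᵀ * W * F)) μ} lamMax)
    (a : ℝ) (ha : lamMax < a) :
    sInf ((fun X => energy W c d X a) '' {X | IsDoublyStochastic X})
      = sInf ((fun X => energy W c d X 0) '' {X | IsPermMatrix X}) := by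
  have hconc : ConcaveOn ℝ {X | IsDoublyStochastic X} fun X => energy W c d X a := by
    refine concaveOn_energy hW c d
      (setOf_isDoublyStochastic_eq_convexHull ▸ convex_convexHull ℝ _) fun X hX Y hY => ?_
    obtain ⟨z, hz⟩ := (hker _).2 (lineSums_colStack_sub_eq_zero hX hY)
    rw [← hz]
    exact hW.dotProduct_mulVec_le_of_transpose_mul_self hF
      (fun μ hμ => (hmax.2 hμ).trans ha.le) z
  rw [setOf_isDoublyStochastic_eq_convexHull] at hconc ⊢
  rw [hconc.sInf_image_convexHull (setOf_isPermMatrix_eq_range ▸ Set.finite_range _)]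
  exact congrArg sInf (Set.image_congr fun X hX => energy_eq_of_isPermMatrix W c d hX a)
end

section
/- Let x be the minimizer of the DS++ relaxation with ‖X‖_F² ≤ n, let v be a unit eigenvector of FᵀWF for the eigenvalue λ̄_min, and set u = Fv and Y = xxᵀ + αuuᵀ with α = n − ‖x‖² ≥ 0. Then Y satisfies: tr(Y) = n, Y ⪰ xxᵀ, AY = bxᵀ, and tr(WY) + cᵀx = xᵀWx + cᵀx + (n − ‖x‖²)λ̄_min. -/
open Matrix

/-!
Since `F` has orthonormal columns spanning `ker A`, the vector `u = F v` is a unit vector in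
`ker A` with `uᵀ W u = vᵀ (Fᵀ W F) v = λ̄_min`. Adding the rank-one term `α u uᵀ` to `x xᵀ`
therefore raises the trace by exactly `α`, is invisible to `A`, and raises `tr (W Y)` by `α λ̄_min`.
-/

section RankOne

variable {ι κ : Type*} [Fintype ι] [Fintype κ]

lemma trace_mul_vecMulVec_self (W : Matrix ι ι ℝ) (a : ι → ℝ) :
    (W * vecMulVec a a).trace = a ⬝ᵥ (W *ᵥ a) := by
  rw [mul_vecMulVec, trace_vecMulVec, dotProduct_comm]

lemma posSemidef_smul_vecMulVec_self {α : ℝ} (hα : 0 ≤ α) (u : ι → ℝ) :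
    (α • vecMulVec u u).PosSemidef := by
  simpa using (posSemidef_vecMulVec_self_star u).smul hα

lemma mulVec_dotProduct_mulVec_mulVec (F : Matrix ι κ ℝ) (W : Matrix ι ι ℝ) (v w : κ → ℝ) :
    (F *ᵥ v) ⬝ᵥ (W *ᵥ (F *ᵥ w)) = v ⬝ᵥ ((Fᵀ * W * F) *ᵥ w) := by
  rw [← mulVec_mulVec, ← mulVec_mulVec, dotProduct_mulVec v, vecMul_transpose, dotProduct_mulVec]

lemma mulVec_dotProduct_mulVec_self_of_transpose_mul_self [DecidableEq κ] {F : Matrix ι κ ℝ}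
    (hF : Fᵀ * F = 1) (v : κ → ℝ) : (F *ᵥ v) ⬝ᵥ (F *ᵥ v) = v ⬝ᵥ v := by
  rw [dotProduct_mulVec, ← mulVec_transpose, mulVec_mulVec, hF, one_mulVec]

end RankOne

section Lift

variable {ι μ : Type*} [Fintype ι] (x u : ι → ℝ) (α : ℝ)

lemma trace_vecMulVec_add_smul_vecMulVec (hu : u ⬝ᵥ u = 1) :
    (vecMulVec x x + α • vecMulVec u u).trace = x ⬝ᵥ x + α := by
  rw [trace_add, trace_smul, trace_vecMulVec, trace_vecMulVec, hu, smul_eq_mul, mul_one]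

lemma mul_vecMulVec_add_smul_vecMulVec_of_mulVec_eq_zero {A : Matrix μ ι ℝ} (hAu : A *ᵥ u = 0) :
    A * (vecMulVec x x + α • vecMulVec u u) = vecMulVec (A *ᵥ x) x := by
  rw [Matrix.mul_add, Matrix.mul_smul, mul_vecMulVec, mul_vecMulVec, hAu, zero_vecMulVec,
    smul_zero, add_zero]

lemma trace_mul_vecMulVec_add_smul_vecMulVec (W : Matrix ι ι ℝ) :
    (W * (vecMulVec x x + α • vecMulVec u u)).trace
      = x ⬝ᵥ (W *ᵥ x) + α * (u ⬝ᵥ (W *ᵥ u)) := by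
  rw [Matrix.mul_add, Matrix.mul_smul, trace_add, trace_smul, trace_mul_vecMulVec_self,
    trace_mul_vecMulVec_self, smul_eq_mul]

end Lift

theorem stmt_14_general {n m k : ℕ}
    (W : Matrix (Fin n × Fin n) (Fin n × Fin n) ℝ)
    (c : Fin n × Fin n → ℝ)
    (A : Matrix (Fin m) (Fin n × Fin n) ℝ) (b : Fin m → ℝ)
    -- `Ax = b` encodes the doubly stochastic equality constraints
    (hAb : ∀ Z : Matrix (Fin n) (Fin n) ℝ,
      A *ᵥ colStack Z = b ↔ ((∀ i, ∑ j, Z i j = 1) ∧ (∀ j, ∑ i, Z i j = 1)))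
    -- `F` is an orthonormal basis of `ker A`
    (F : Matrix (Fin n × Fin n) (Fin k) ℝ) (hF : Fᵀ * F = 1)
    (hker : ∀ y : Fin n × Fin n → ℝ, (∃ z, F *ᵥ z = y) ↔ A *ᵥ y = 0)
    (lamMin : ℝ)
    -- `X` is a minimizer of the DS++ relaxation, with column stack `x`
    (X : Matrix (Fin n) (Fin n) ℝ) (hX : IsDoublyStochastic X)
    (hfrob : colStack X ⬝ᵥ colStack X ≤ n)
    -- `v` is a unit eigenvector of `FᵀWF` for the eigenvalue `λ̄_min`
    (v : Fin k → ℝ) (hv : (Fᵀ * W * F) *ᵥ v = lamMin • v) (hvunit : v ⬝ᵥ v = 1) :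
    0 ≤ (n : ℝ) - colStack X ⬝ᵥ colStack X ∧
    (Matrix.vecMulVec (colStack X) (colStack X)
        + ((n : ℝ) - colStack X ⬝ᵥ colStack X) • Matrix.vecMulVec (F *ᵥ v) (F *ᵥ v)).trace
      = (n : ℝ) ∧
    ((Matrix.vecMulVec (colStack X) (colStack X)
        + ((n : ℝ) - colStack X ⬝ᵥ colStack X) • Matrix.vecMulVec (F *ᵥ v) (F *ᵥ v))
      - Matrix.vecMulVec (colStack X) (colStack X)).PosSemidef ∧
    A * (Matrix.vecMulVec (colStack X) (colStack X)
        + ((n : ℝ) - colStack X ⬝ᵥ colStack X) • Matrix.vecMulVec (F *ᵥ v) (F *ᵥ v))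
      = Matrix.vecMulVec b (colStack X) ∧
    (W * (Matrix.vecMulVec (colStack X) (colStack X)
        + ((n : ℝ) - colStack X ⬝ᵥ colStack X) • Matrix.vecMulVec (F *ᵥ v) (F *ᵥ v))).trace
        + c ⬝ᵥ colStack X
      = colStack X ⬝ᵥ (W *ᵥ colStack X) + c ⬝ᵥ colStack X
        + ((n : ℝ) - colStack X ⬝ᵥ colStack X) * lamMin := by
  set x := colStack X
  set u := F *ᵥ v
  have hα : 0 ≤ (n : ℝ) - x ⬝ᵥ x := sub_nonneg.mpr hfrob
  have hu_unit : u ⬝ᵥ u = 1 := by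
    rw [mulVec_dotProduct_mulVec_self_of_transpose_mul_self hF, hvunit]
  have hWu : u ⬝ᵥ (W *ᵥ u) = lamMin := by
    rw [mulVec_dotProduct_mulVec_mulVec, hv, dotProduct_smul, hvunit, smul_eq_mul, mul_one]
  have hAx : A *ᵥ x = b := (hAb X).mpr ⟨hX.2.1, hX.2.2⟩
  have hAu : A *ᵥ u = 0 := (hker u).mp ⟨v, rfl⟩
  refine ⟨hα, ?_, ?_, ?_, ?_⟩
  · rw [trace_vecMulVec_add_smul_vecMulVec x u _ hu_unit, add_sub_cancel]
  · rw [add_sub_cancel_left]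
    exact posSemidef_smul_vecMulVec_self hα u
  · rw [mul_vecMulVec_add_smul_vecMulVec_of_mulVec_eq_zero x u _ hAu, hAx]
  · rw [trace_mul_vecMulVec_add_smul_vecMulVec, hWu]
    ring

theorem stmt_14 {n m k : ℕ}
    (W : Matrix (Fin n × Fin n) (Fin n × Fin n) ℝ) (hW : W.IsSymm)
    (c : Fin n × Fin n → ℝ) (d : ℝ)
    (A : Matrix (Fin m) (Fin n × Fin n) ℝ) (b : Fin m → ℝ)
    -- `Ax = b` encodes the doubly stochastic equality constraints
    (hAb : ∀ Z : Matrix (Fin n) (Fin n) ℝ,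
      A *ᵥ colStack Z = b ↔ ((∀ i, ∑ j, Z i j = 1) ∧ (∀ j, ∑ i, Z i j = 1)))
    -- `F` is an orthonormal basis of `ker A`
    (F : Matrix (Fin n × Fin n) (Fin k) ℝ) (hF : Fᵀ * F = 1)
    (hker : ∀ y : Fin n × Fin n → ℝ, (∃ z, F *ᵥ z = y) ↔ A *ᵥ y = 0)
    (lamMin : ℝ)
    (hmin : IsLeast {μ | Module.End.HasEigenvalue (Matrix.toLin' (Fᵀ * W * F)) μ} lamMin)
    -- `X` is a minimizer of the DS++ relaxation, with column stack `x`
    (X : Matrix (Fin n) (Fin n) ℝ) (hX : IsDoublyStochastic X)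
    (hXmin : ∀ Z, IsDoublyStochastic Z → energy W c d X lamMin ≤ energy W c d Z lamMin)
    (hfrob : colStack X ⬝ᵥ colStack X ≤ n)
    -- `v` is a unit eigenvector of `FᵀWF` for the eigenvalue `λ̄_min`
    (v : Fin k → ℝ) (hv : (Fᵀ * W * F) *ᵥ v = lamMin • v) (hvunit : v ⬝ᵥ v = 1) :
    0 ≤ (n : ℝ) - colStack X ⬝ᵥ colStack X ∧
    (Matrix.vecMulVec (colStack X) (colStack X)
        + ((n : ℝ) - colStack X ⬝ᵥ colStack X) • Matrix.vecMulVec (F *ᵥ v) (F *ᵥ v)).trace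
      = (n : ℝ) ∧
    ((Matrix.vecMulVec (colStack X) (colStack X)
        + ((n : ℝ) - colStack X ⬝ᵥ colStack X) • Matrix.vecMulVec (F *ᵥ v) (F *ᵥ v))
      - Matrix.vecMulVec (colStack X) (colStack X)).PosSemidef ∧
    A * (Matrix.vecMulVec (colStack X) (colStack X)
        + ((n : ℝ) - colStack X ⬝ᵥ colStack X) • Matrix.vecMulVec (F *ᵥ v) (F *ᵥ v))
      = Matrix.vecMulVec b (colStack X) ∧
    (W * (Matrix.vecMulVec (colStack X) (colStack X)
        + ((n : ℝ) - colStack X ⬝ᵥ colStack X) • Matrix.vecMulVec (F *ᵥ v) (F *ᵥ v))).trace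
        + c ⬝ᵥ colStack X
      = colStack X ⬝ᵥ (W *ᵥ colStack X) + c ⬝ᵥ colStack X
        + ((n : ℝ) - colStack X ⬝ᵥ colStack X) * lamMin :=
  stmt_14_general W c A b hAb F hF hker lamMin X hX hfrob v hv hvunit
end

section
/- Let p, q be linear polynomials on ℝ^m and suppose the symmetric PSD matrix Y − xxᵀ satisfies aᵀ(Y − xxᵀ)a = 0 where p(x) = aᵀx + β. Then for the product f = pq with q(x) = cᵀx + δ, the linearization satisfies f̄(x,Y) = p(x)q(x), i.e., the linearized product equals the true product. -/
/-!
With `M = Y - x xᵀ` and `S = (a cᵀ + c aᵀ)/2`, the linearization exceeds the product by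
`tr (S M) = cᵀ M a`. A positive semidefinite `M` with `aᵀ M a = 0` satisfies `M a = 0`,
so this defect vanishes.
-/

open Matrix

namespace Matrix

variable {n R : Type*} [Fintype n] [CommSemiring R]

theorem trace_vecMulVec_mul (u v : n → R) (M : Matrix n n R) :
    (vecMulVec u v * M).trace = v ⬝ᵥ (M *ᵥ u) := by
  rw [vecMulVec_mul, trace_vecMulVec, dotProduct_comm, dotProduct_mulVec]

theorem IsSymm.trace_vecMulVec_add_vecMulVec_mul {M : Matrix n n R} (hM : M.IsSymm)
    (a c : n → R) :
    ((vecMulVec a c + vecMulVec c a) * M).trace = 2 * (c ⬝ᵥ (M *ᵥ a)) := by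
  rw [add_mul, trace_add, trace_vecMulVec_mul, trace_vecMulVec_mul, dotProduct_mulVec,
    ← mulVec_transpose, hM.eq, dotProduct_comm, two_mul]

end Matrix

theorem stmt_16 {m : ℕ} (a c x : Fin m → ℝ) (β δ : ℝ)
    (Y : Matrix (Fin m) (Fin m) ℝ) (hY : (Y - Matrix.vecMulVec x x).PosSemidef)
    (ha : a ⬝ᵥ ((Y - Matrix.vecMulVec x x) *ᵥ a) = 0) :
    (((1 / 2 : ℝ) • (Matrix.vecMulVec a c + Matrix.vecMulVec c a)) * Y).trace
        + (β • c + δ • a) ⬝ᵥ x + β * δ = (a ⬝ᵥ x + β) * (c ⬝ᵥ x + δ) := by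
  set M := Y - vecMulVec x x
  have hMa : M *ᵥ a = 0 := (hY.dotProduct_mulVec_zero_iff a).mp (by simpa using ha)
  have hM : M.IsSymm := isHermitian_iff_isSymm.mp hY.isHermitian
  have hxx : (vecMulVec x x).IsSymm := transpose_vecMulVec x x
  have hYM : Y = M + vecMulVec x x := (sub_add_cancel Y _).symm
  rw [hYM, smul_mul, trace_smul, mul_add, trace_add, hM.trace_vecMulVec_add_vecMulVec_mul,
    hxx.trace_vecMulVec_add_vecMulVec_mul, hMa, vecMulVec_mulVec]
  simp only [dotProduct_zero, add_dotProduct, smul_dotProduct, dotProduct_smul, smul_eq_mul,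
    MulOpposite.smul_eq_mul_unop, MulOpposite.unop_op]
  rw [dotProduct_comm x a]
  ring
end
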